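/- Let 0<m<1, let μ = u^{-1-m}du on (0,∞), and let ν be a probability distribution on (0,∞)×𝒳 of a pair (X,Y) with E X < ∞. Then the image of the product measure μ⊗ν under the map (u,x,y) ↦ (ux,y) equals (E X^m)·(μ ⊗ ν_m); in particular for Borel A⊆(0,∞) and measurable B⊆𝒳, (μ⊗ν){(u,x,y): ux∈A, y∈B} = E X^m · μ(A) · ν_m(B). -/

import Mathlib

/-! Fibrewise, for fixed `(x, y)` with `x > 0`, the image of `μ` under `u ↦ u x` is `x^m • μ`:
the density `u^{-1-m}` is homogeneous of degree `-1-m` and Lebesgue measure scales by `x⁻¹`.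
Integrating over `ν` by Tonelli therefore replaces `ν` by `ν` reweighted with `X^m`, whose second
marginal is `E X^m` times the tilted law. Since `X > 0` a.s. and `X^m ≤ 1 + X` for
`0 < m < 1`, we have `0 < E X^m < ∞`, so the normalisation inside `tiltedLaw` can be undone. -/

open MeasureTheory Real
open scoped ENNReal

noncomputable section

/-- The intensity measure `u^{-1-m} du` on `(0,∞)`. -/
def pdIntensity (m : ℝ) : Measure ℝ :=
  (volume.restrict (Set.Ioi (0 : ℝ))).withDensity fun u => ENNReal.ofReal (u ^ (-1 - m))

/-- The tilted law `ν_m` on `𝒳` of the second coordinate `Y` under the change of density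
`X^m / E X^m`, for a law `ν` of a pair `(X, Y)` on `ℝ × 𝒳`; equivalently
`ν_m (B) = ∫ (x^m / E X^m) ν_x (B) dν₁(x)` where `ν_x` is the regular conditional
distribution of `Y` given `X = x` and `ν₁` the first marginal. -/
def tiltedLaw {𝒳 : Type*} [MeasurableSpace 𝒳] (ν : Measure (ℝ × 𝒳)) (m : ℝ) : Measure 𝒳 :=
  (ν.withDensity fun p => ENNReal.ofReal (p.1 ^ m / ∫ q, q.1 ^ m ∂ν)).snd

instance pdIntensity.instSigmaFinite (m : ℝ) : SigmaFinite (pdIntensity m) := by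
  unfold pdIntensity; infer_instance

lemma pdIntensity_preimage_mul_right (m : ℝ) {x : ℝ} (hx : 0 < x) {A : Set ℝ}
    (hA : MeasurableSet A) :
    pdIntensity m ((· * x) ⁻¹' A) = ENNReal.ofReal (x ^ m) * pdIntensity m A := by
  set g : ℝ → ℝ≥0∞ := (Set.Ioi 0).indicator fun v => ENNReal.ofReal (v ^ (-1 - m))
  have hg_meas : Measurable g := by
    refine Measurable.indicator ?_ measurableSet_Ioi
    fun_prop
  have hg_hom : ∀ u, g u = ENNReal.ofReal (x ^ m * x) * g (u * x) := by
    intro u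
    rcases le_or_gt u 0 with hu | hu
    · have hux : ¬ 0 < u * x := not_lt.2 (mul_nonpos_of_nonpos_of_nonneg hu hx.le)
      simp [g, Set.indicator_of_notMem, hu.not_gt, hux]
    · simp only [g]
      rw [Set.indicator_of_mem (Set.mem_Ioi.2 hu),
        Set.indicator_of_mem (Set.mem_Ioi.2 (mul_pos hu hx)),
        ← ENNReal.ofReal_mul (by positivity), mul_rpow hu.le hx.le, ← rpow_add_one hx.ne']
      congr 1
      calc u ^ (-1 - m) = x ^ (m + 1 + (-1 - m)) * u ^ (-1 - m) := by
            rw [show m + 1 + (-1 - m) = 0 by ring, rpow_zero, one_mul]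
        _ = _ := by rw [rpow_add hx]; ring
  have hpd : pdIntensity m = volume.withDensity g := by
    rw [pdIntensity, withDensity_indicator measurableSet_Ioi]
  rw [hpd, withDensity_apply _ (measurable_mul_const x hA), withDensity_apply _ hA]
  calc ∫⁻ u in (· * x) ⁻¹' A, g u
      = ENNReal.ofReal (x ^ m * x) * ∫⁻ v in A, g v ∂(Measure.map (· * x) volume) := by
        rw [setLIntegral_map hA hg_meas (measurable_mul_const x), ←
          lintegral_const_mul' _ _ ENNReal.ofReal_ne_top]
        exact lintegral_congr fun u => hg_hom u
    _ = ENNReal.ofReal (x ^ m) * ∫⁻ v in A, g v := by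
        rw [map_volume_mul_right hx.ne', Measure.restrict_smul, lintegral_smul_measure,
          smul_eq_mul, ← mul_assoc, ← ENNReal.ofReal_mul (by positivity),
          abs_of_pos (inv_pos.2 hx), mul_assoc, mul_inv_cancel₀ hx.ne', mul_one]

section Dilation

variable {𝒳 : Type*} [MeasurableSpace 𝒳]

instance tiltedLaw.instSFinite (ν : Measure (ℝ × 𝒳)) [SFinite ν] (m : ℝ) :
    SFinite (tiltedLaw ν m) := by
  unfold tiltedLaw; infer_instance

theorem map_mul_prod_eq_prod_snd_withDensity {μ : Measure ℝ} [SFinite μ]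
    {ν : Measure (ℝ × 𝒳)} [SFinite ν] {h : ℝ → ℝ≥0∞} (hh : Measurable h)
    (hμ : ∀ x, 0 < x → ∀ A, MeasurableSet A → μ ((· * x) ⁻¹' A) = h x * μ A)
    (hν : ∀ᵐ p ∂ν, 0 < p.1) :
    Measure.map (fun p : ℝ × (ℝ × 𝒳) => (p.1 * p.2.1, p.2.2)) (μ.prod ν)
      = μ.prod (ν.withDensity fun p => h p.1).snd := by
  have hT : Measurable fun p : ℝ × (ℝ × 𝒳) => (p.1 * p.2.1, p.2.2) := by fun_prop
  ext s hs
  have hslice : Measurable fun y : 𝒳 => μ ((·, y) ⁻¹' s) := measurable_measure_prodMk_right hs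
  rw [Measure.map_apply hT hs, Measure.prod_apply_symm (hT hs), Measure.prod_apply_symm hs,
    Measure.snd, lintegral_map hslice measurable_snd,
    lintegral_withDensity_eq_lintegral_mul _ (by fun_prop)
      (g := fun p : ℝ × 𝒳 => μ ((·, p.2) ⁻¹' s)) (hslice.comp measurable_snd)]
  refine lintegral_congr_ae ?_
  filter_upwards [hν] with q hq
  exact hμ q.1 hq ((·, q.2) ⁻¹' s) (measurable_prodMk_right hs)

theorem ofReal_integral_smul_tiltedLaw (ν : Measure (ℝ × 𝒳)) (m : ℝ)
    (hc : 0 < ∫ q, q.1 ^ m ∂ν) :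
    ENNReal.ofReal (∫ q, q.1 ^ m ∂ν) • tiltedLaw ν m
      = (ν.withDensity fun p => ENNReal.ofReal (p.1 ^ m)).snd := by
  rw [tiltedLaw, Measure.snd, Measure.snd, ← Measure.map_smul,
    ← withDensity_smul' _ _ ENNReal.ofReal_ne_top]
  congr 2
  funext p
  rw [Pi.smul_apply, smul_eq_mul, ← ENNReal.ofReal_mul hc.le, mul_div_cancel₀ _ hc.ne']

end Dilation

theorem integral_pos_of_ae_pos {α : Type*} [MeasurableSpace α] {μ : Measure α} [NeZero μ]
    {f : α → ℝ} (hfi : Integrable f μ) (hf : ∀ᵐ a ∂μ, 0 < f a) : 0 < ∫ a, f a ∂μ := by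
  have hsupp : Function.support f =ᵐ[μ] (Set.univ : Set α) :=
    ae_eq_univ.2 (ae_iff.1 (hf.mono fun a ha => ha.ne'))
  rw [integral_pos_iff_support_of_nonneg_ae (hf.mono fun a ha => ha.le) hfi,
    measure_congr hsupp]
  exact (NeZero.ne (μ Set.univ)).bot_lt

theorem map_mul_prod_tilted_general {𝒳 : Type*} [MeasurableSpace 𝒳]
    (m : ℝ) (hm0 : 0 < m) (hm1 : m < 1)
    (ν : Measure (ℝ × 𝒳)) [IsProbabilityMeasure ν]
    (hpos : ν {p | p.1 ≤ 0} = 0)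
    (hint : Integrable (fun p : ℝ × 𝒳 => p.1) ν) :
    Measure.map (fun p : ℝ × (ℝ × 𝒳) => (p.1 * p.2.1, p.2.2)) ((pdIntensity m).prod ν)
        = ENNReal.ofReal (∫ p, p.1 ^ m ∂ν) • ((pdIntensity m).prod (tiltedLaw ν m)) ∧
      ∀ (A : Set ℝ) (B : Set 𝒳), MeasurableSet A → A ⊆ Set.Ioi (0 : ℝ) → MeasurableSet B →
        ((pdIntensity m).prod ν) {p : ℝ × (ℝ × 𝒳) | p.1 * p.2.1 ∈ A ∧ p.2.2 ∈ B}
          = ENNReal.ofReal (∫ p, p.1 ^ m ∂ν) * pdIntensity m A * tiltedLaw ν m B := by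
  have hν : ∀ᵐ p ∂ν, 0 < p.1 := by
    simpa only [ae_iff, not_lt] using hpos
  have hint_rpow : Integrable (fun p : ℝ × 𝒳 => p.1 ^ m) ν := by
    refine (integrable_norm_rpow_of_le hint.aestronglyMeasurable hm0.le zero_le_one hm1.le
      (by simpa using hint.norm)).congr ?_
    filter_upwards [hν] with p hp
    rw [norm_of_nonneg hp.le]
  have hc := integral_pos_of_ae_pos hint_rpow (hν.mono fun p hp => rpow_pos_of_pos hp m)
  have hmap : Measure.map (fun p : ℝ × (ℝ × 𝒳) => (p.1 * p.2.1, p.2.2)) ((pdIntensity m).prod ν)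
      = ENNReal.ofReal (∫ p, p.1 ^ m ∂ν) • ((pdIntensity m).prod (tiltedLaw ν m)) := by
    rw [← Measure.prod_smul_right, ofReal_integral_smul_tiltedLaw ν m hc]
    exact map_mul_prod_eq_prod_snd_withDensity (h := fun x => ENNReal.ofReal (x ^ m))
      (by fun_prop) (fun x hx A hA => pdIntensity_preimage_mul_right m hx hA) hν
  refine ⟨hmap, fun A B hA _ hB => ?_⟩
  have hT : Measurable fun p : ℝ × (ℝ × 𝒳) => (p.1 * p.2.1, p.2.2) := by fun_prop
  rw [mul_assoc, ← Measure.prod_prod, ← smul_eq_mul, ← Measure.smul_apply, ← hmap,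
    Measure.map_apply hT (hA.prod hB)]
  rfl

/-- Let `0 < m < 1`, `μ = u^{-1-m} du` on `(0,∞)`, and `ν` a probability distribution on
`(0,∞) × 𝒳` of a pair `(X,Y)` with `E X < ∞`. Then the image of `μ ⊗ ν` under
`(u, x, y) ↦ (u * x, y)` equals `(E X^m) • (μ ⊗ ν_m)`; in particular, for Borel
`A ⊆ (0,∞)` and measurable `B ⊆ 𝒳`,
`(μ ⊗ ν) {(u,x,y) : u * x ∈ A, y ∈ B} = E X^m * μ(A) * ν_m(B)`. -/
theorem map_mul_prod_tilted {𝒳 : Type*} [MeasurableSpace 𝒳]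
    [TopologicalSpace 𝒳] [PolishSpace 𝒳] [BorelSpace 𝒳]
    (m : ℝ) (hm0 : 0 < m) (hm1 : m < 1)
    (ν : Measure (ℝ × 𝒳)) [IsProbabilityMeasure ν]
    (hpos : ν {p | p.1 ≤ 0} = 0)
    (hint : Integrable (fun p : ℝ × 𝒳 => p.1) ν) :
    Measure.map (fun p : ℝ × (ℝ × 𝒳) => (p.1 * p.2.1, p.2.2)) ((pdIntensity m).prod ν)
        = ENNReal.ofReal (∫ p, p.1 ^ m ∂ν) • ((pdIntensity m).prod (tiltedLaw ν m)) ∧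
      ∀ (A : Set ℝ) (B : Set 𝒳), MeasurableSet A → A ⊆ Set.Ioi (0 : ℝ) → MeasurableSet B →
        ((pdIntensity m).prod ν) {p : ℝ × (ℝ × 𝒳) | p.1 * p.2.1 ∈ A ∧ p.2.2 ∈ B}
          = ENNReal.ofReal (∫ p, p.1 ^ m ∂ν) * pdIntensity m A * tiltedLaw ν m B :=
  map_mul_prod_tilted_general m hm0 hm1 ν hpos hint

end
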